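/- arXiv:1510.05113 — 2 statements merged into one kernel-verified Lean document; each statement's English description precedes it below -/
import Mathlib

section
/- Let H = (V,H) be a boolean representable simplicial complex. Then for every p ∈ V, the closure of {p} equals the set {q ∈ V : cl({q}) = cl({p})}; in particular this set is a flat. -/
/-!
If `u, v` are distinct vertices of a face, they occur as `x i`, `x j` with `i < j` in a chain of
flats `F` witnessing boolean representability; then `cl {x i} ⊆ F (i+1) ⊆ F j` while `x j ∉ F j`,
so `cl {u} ≠ cl {v}`. Hence a face meets the class `{q | cl {q} = cl {p}}` in at most one vertex.
That makes the class a flat: the only obstruction would be a vertex `r` with `{r, q}` not a face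
for some `q` in the class, and then `r ∈ cl {q}` and `q ∈ cl {r}` put `r` in the class.
A flat containing `p` and contained in `cl {p}` is `cl {p}`.
-/

open scoped Classical

variable {V : Type}

def IsSC (faces : Set (Finset V)) : Prop :=
  (∀ v : V, ({v} : Finset V) ∈ faces) ∧
    ∀ ⦃X Y : Finset V⦄, X ∈ faces → Y ⊆ X → Y ∈ faces

def IsFlat (faces : Set (Finset V)) (F : Set V) : Prop :=
  ∀ I ∈ faces, (I : Set V) ⊆ F → ∀ p ∉ F, insert p I ∈ faces

def cl (faces : Set (Finset V)) (X : Set V) : Set V :=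
  ⋂₀ {F : Set V | IsFlat faces F ∧ X ⊆ F}

def BRep (faces : Set (Finset V)) : Prop :=
  ∀ X ∈ faces, ∃ (k : ℕ) (F : Fin (k + 1) → Set V) (x : Fin k → V),
    (∀ i, IsFlat faces (F i)) ∧ StrictMono F ∧ Function.Injective x ∧
    (∀ i : Fin k, x i ∈ F i.succ \ F i.castSucc) ∧
    X = Finset.image x Finset.univ

def skel (faces : Set (Finset V)) : SimpleGraph V where
  Adj p q := p ≠ q ∧ ({p, q} : Finset V) ∈ faces
  symm := by
    constructor
    rintro p q ⟨h1, h2⟩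
    exact ⟨h1.symm, by rwa [Finset.pair_comm]⟩
  loopless := by constructor; rintro p ⟨h, _⟩; exact h rfl

def flatGraph (faces : Set (Finset V)) : SimpleGraph V where
  Adj p q := p ≠ q ∧ cl faces {p, q} ≠ Set.univ
  symm := by
    constructor
    rintro p q ⟨h1, h2⟩
    exact ⟨h1.symm, by rwa [Set.pair_comm]⟩
  loopless := by constructor; rintro p ⟨h, _⟩; exact h rfl

section Closure

variable {faces : Set (Finset V)}

lemma IsFlat.sInter {S : Set (Set V)} (hS : ∀ F ∈ S, IsFlat faces F) :
    IsFlat faces (⋂₀ S) := by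
  intro I hI hIS r hr
  simp only [Set.mem_sInter, not_forall] at hr
  obtain ⟨F, hFS, hrF⟩ := hr
  exact hS F hFS I hI (hIS.trans (Set.sInter_subset_of_mem hFS)) r hrF

lemma isFlat_cl (faces : Set (Finset V)) (X : Set V) : IsFlat faces (cl faces X) :=
  IsFlat.sInter fun _ hF => hF.1

lemma subset_cl (faces : Set (Finset V)) (X : Set V) : X ⊆ cl faces X :=
  fun _ hx => Set.mem_sInter.2 fun _ hF => hF.2 hx

lemma cl_subset_of_isFlat {X F : Set V} (hF : IsFlat faces F) (hXF : X ⊆ F) :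
    cl faces X ⊆ F :=
  Set.sInter_subset_of_mem ⟨hF, hXF⟩

lemma cl_singleton_subset_of_mem {p q : V} (h : q ∈ cl faces {p}) :
    cl faces {q} ⊆ cl faces {p} :=
  cl_subset_of_isFlat (isFlat_cl faces {p}) (Set.singleton_subset_iff.2 h)

lemma mem_cl_singleton_of_pair_notMem {p q : V} (hp : ({p} : Finset V) ∈ faces)
    (h : ({q, p} : Finset V) ∉ faces) : q ∈ cl faces {p} := by
  by_contra hq
  simp only [cl, Set.mem_sInter, not_forall] at hq
  obtain ⟨F, ⟨hF, hpF⟩, hqF⟩ := hq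
  exact h (hF {p} hp (by simpa using hpF) q hqF)

end Closure

section BooleanRepresentable

variable {faces : Set (Finset V)}

lemma BRep.injOn_cl_singleton (hbr : BRep faces) {I : Finset V} (hI : I ∈ faces) :
    Set.InjOn (fun v => cl faces {v}) I := by
  obtain ⟨k, F, x, hflat, hmono, -, hdiff, rfl⟩ := hbr I hI
  have hne : ∀ i j, i < j → cl faces {x i} ≠ cl faces {x j} := by
    intro i j hij heq
    have hsub : cl faces {x i} ⊆ F j.castSucc :=
      (cl_subset_of_isFlat (hflat _) (Set.singleton_subset_iff.2 (hdiff i).1)).trans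
        (hmono.monotone (Fin.succ_le_castSucc_iff.2 hij))
    exact (hdiff j).2 (hsub (heq ▸ subset_cl faces {x j} rfl))
  rintro _ hu _ hv huv
  obtain ⟨i, -, rfl⟩ := Finset.mem_image.1 hu
  obtain ⟨j, -, rfl⟩ := Finset.mem_image.1 hv
  rcases lt_trichotomy i j with hij | rfl | hji
  · exact absurd huv (hne i j hij)
  · rfl
  · exact absurd huv.symm (hne j i hji)

lemma isFlat_setOf_cl_singleton_eq (hsing : ∀ v : V, ({v} : Finset V) ∈ faces)
    (hbr : BRep faces) (p : V) : IsFlat faces {q : V | cl faces {q} = cl faces {p}} := by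
  intro I hI hIS r hr
  rcases I.eq_empty_or_nonempty with rfl | ⟨q, hq⟩
  · simpa using hsing r
  have hIq : I = {q} := Finset.eq_singleton_iff_unique_mem.2
    ⟨hq, fun v hv => hbr.injOn_cl_singleton hI hv hq ((hIS hv).trans (hIS hq).symm)⟩
  subst hIq
  by_contra hrq
  have hrq' : ({q, r} : Finset V) ∉ faces := by rwa [Finset.pair_comm]
  have hcl : cl faces {r} = cl faces {q} := subset_antisymm
    (cl_singleton_subset_of_mem (mem_cl_singleton_of_pair_notMem (hsing q) hrq))
    (cl_singleton_subset_of_mem (mem_cl_singleton_of_pair_notMem (hsing r) hrq'))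
  exact hr (hcl.trans (hIS (Finset.mem_singleton_self q)))

end BooleanRepresentable

theorem closure_singleton_eq_general
    {faces : Set (Finset V)} (hsc : IsSC faces) (hbr : BRep faces) (p : V) :
    cl faces {p} = {q : V | cl faces {q} = cl faces {p}} ∧
      IsFlat faces {q : V | cl faces {q} = cl faces {p}} := by
  have hflat := isFlat_setOf_cl_singleton_eq hsc.1 hbr p
  refine ⟨subset_antisymm ?_ ?_, hflat⟩
  · exact cl_subset_of_isFlat hflat (Set.singleton_subset_iff.2 rfl)
  · exact fun q hq => hq ▸ subset_cl faces {q} rfl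

theorem closure_singleton_eq [Fintype V] [Nonempty V]
    {faces : Set (Finset V)} (hsc : IsSC faces) (hbr : BRep faces) (p : V) :
    cl faces {p} = {q : V | cl faces {q} = cl faces {p}} ∧
      IsFlat faces {q : V | cl faces {q} = cl faces {p}} :=
  closure_singleton_eq_general hsc hbr p
end

section
/- Let M = (V,H) be a matroid of dimension at least 2. Then for all distinct p, q ∈ V, the closure of {p,q} is a proper subset of V; consequently the graph of flats of M is the complete graph on V. -/
open scoped Classical

variable {V : Type}

def ExchangeProp (faces : Set (Finset V)) : Prop :=
  ∀ I ∈ faces, ∀ J ∈ faces, I.card = J.card + 1 →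
    ∃ i ∈ I \ J, insert i J ∈ faces

/-!
The faces are the independent sets of a matroid `M` on `V`. Every closure in `M` is a flat in
the sense of `IsFlat`, so `cl {p, q}` lies in the `M`-closure of `{p, q}`, which has rank at
most `2`; a face with three elements shows that the rank of `M` is at least `3`, so this closure
is not all of `V`.
-/

theorem Matroid.closure_ne_ground_of_encard_lt {α : Type*} {M : Matroid α} {I X : Set α}
    (hI : M.Indep I) (hXI : X.encard < I.encard) : M.closure X ≠ M.E := by
  intro hX
  have hrank : M.eRank = M.eRk X := by rw [← M.eRk_ground, ← hX, M.eRk_closure_eq]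
  exact (hXI.trans_le hI.encard_le_eRank).not_ge (hrank ▸ M.eRk_le_encard X)

section Faces

variable {faces : Set (Finset V)}

theorem IsSC.empty_mem (hsc : IsSC faces) {X : Finset V} (hX : X ∈ faces) : ∅ ∈ faces :=
  hsc.2 hX X.empty_subset

theorem ExchangeProp.augment (hsc : IsSC faces) (hex : ExchangeProp faces)
    {I J : Finset V} (hI : I ∈ faces) (hJ : J ∈ faces) (hIJ : I.card < J.card) :
    ∃ e ∈ J, e ∉ I ∧ insert e I ∈ faces := by
  obtain ⟨J', hJ'J, hJ'card⟩ := Finset.exists_subset_card_eq (n := I.card + 1) hIJ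
  obtain ⟨e, he, hins⟩ := hex J' (hsc.2 hJ hJ'J) I hI hJ'card
  rw [Finset.mem_sdiff] at he
  exact ⟨e, hJ'J he.1, he.2, hins⟩

noncomputable def IsSC.toMatroid (hsc : IsSC faces) (hex : ExchangeProp faces)
    (hempty : ∅ ∈ faces) : Matroid V :=
  (IndepMatroid.ofFinset Set.univ (· ∈ faces) hempty (fun _ _ hJ hIJ => hsc.2 hJ hIJ)
    (fun _ _ hI hJ hIJ => hex.augment hsc hI hJ hIJ) (fun _ _ => Set.subset_univ _)).matroid

variable (hsc : IsSC faces) (hex : ExchangeProp faces) (hempty : ∅ ∈ faces)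

@[simp]
theorem IsSC.toMatroid_indep_coe_iff {I : Finset V} :
    (hsc.toMatroid hex hempty).Indep I ↔ I ∈ faces := by
  rw [IsSC.toMatroid, IndepMatroid.matroid_indep_iff, IndepMatroid.ofFinset_indep]

theorem IsSC.isFlat_of_isFlat_toMatroid {F : Set V} (hF : (hsc.toMatroid hex hempty).IsFlat F) :
    IsFlat faces F := by
  set M := hsc.toMatroid hex hempty
  intro I hI hIF p hpF
  have hIindep : M.Indep I := (hsc.toMatroid_indep_coe_iff hex hempty).2 hI
  have hclI : M.closure I ⊆ F := hF.closure ▸ M.closure_subset_closure hIF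
  have hins : M.Indep (insert p (I : Set V)) :=
    (hIindep.insert_indep_iff_of_notMem fun hpI => hpF (hIF hpI)).2
      ⟨Set.mem_univ p, fun hp => hpF (hclI hp)⟩
  rwa [← Finset.coe_insert, hsc.toMatroid_indep_coe_iff] at hins

theorem IsSC.cl_subset_closure_toMatroid (X : Set V) :
    cl faces X ⊆ (hsc.toMatroid hex hempty).closure X :=
  Set.sInter_subset_of_mem
    ⟨hsc.isFlat_of_isFlat_toMatroid hex hempty (Matroid.isFlat_closure _),
      Matroid.subset_closure _ X (Set.subset_univ X)⟩

theorem IsSC.cl_ne_univ_of_card_lt (hsc : IsSC faces) (hex : ExchangeProp faces)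
    (hempty : ∅ ∈ faces) (X : Set V) {J : Finset V} (hJ : J ∈ faces)
    (hXJ : X.encard < J.card) : cl faces X ≠ Set.univ := by
  set M := hsc.toMatroid hex hempty
  have hJindep : M.Indep J := (hsc.toMatroid_indep_coe_iff hex hempty).2 hJ
  have hMX : M.closure X ≠ M.E :=
    Matroid.closure_ne_ground_of_encard_lt hJindep (by rwa [Set.encard_coe_eq_coe_finsetCard])
  intro hcl
  exact hMX (Set.eq_univ_of_univ_subset (hcl ▸ hsc.cl_subset_closure_toMatroid hex hempty X))

end Faces

theorem matroid_flatGraph_complete_general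
    {faces : Set (Finset V)} (hsc : IsSC faces) (hex : ExchangeProp faces)
    (hdim : ∃ X ∈ faces, 3 ≤ X.card) (p q : V) (hpq : p ≠ q) :
    cl faces ({p, q} : Set V) ≠ Set.univ ∧ (flatGraph faces).Adj p q := by
  obtain ⟨X, hX, hXcard⟩ := hdim
  have hpair : ({p, q} : Set V).encard < X.card := by
    rw [Set.encard_pair hpq]
    exact_mod_cast hXcard
  have hcl := hsc.cl_ne_univ_of_card_lt hex (hsc.empty_mem hX) {p, q} hX hpair
  exact ⟨hcl, hpq, hcl⟩

theorem matroid_flatGraph_complete [Fintype V] [Nonempty V]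
    {faces : Set (Finset V)} (hsc : IsSC faces) (hex : ExchangeProp faces)
    (hdim : ∃ X ∈ faces, 3 ≤ X.card) (p q : V) (hpq : p ≠ q) :
    cl faces ({p, q} : Set V) ≠ Set.univ ∧ (flatGraph faces).Adj p q :=
  matroid_flatGraph_complete_general hsc hex hdim p q hpq
end
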